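/- Consider a multi-commodity routing instance with total demand d in which every edge e has an M/M/1 latency function ℓ_e(x) = 1/(u_e − x) with capacity u_e ≥ u_min > d, and let ρ_max = d/u_min < 1. For every θ ≥ 1, letting ρ_max(θ) = max{0, 1 − θ(1 − ρ_max)}, there exists a θ-PNE edge flow whose social cost is at most (1/2)·(1 + 1/√(1 − ρ_max(θ))) times the socially optimal cost; moreover, if θ ≥ 1/(1 − ρ_max) then there exists a θ-PNE edge flow whose social cost equals the socially optimal cost. -/

import Mathlib

open scoped BigOperators

/-- A routing instance: a finite directed (multi)graph given by source/target maps
on edges, a finite set of commodities with sources, sinks, demands, and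
load-dependent latency functions on edges. -/
structure RoutingInstance (V E K : Type*) where
  src : E → V
  tgt : E → V
  source : K → V
  sink : K → V
  demand : K → ℝ
  latency : E → ℝ → ℝ

namespace RoutingInstance

variable {V E K : Type*} [Fintype V] [Fintype E] [Fintype K] [DecidableEq E]

/-- Standard assumptions: positive demands, latencies nonnegative and
nondecreasing on `[0, ∞)`. -/
def Standard (G : RoutingInstance V E K) : Prop :=
  (∀ k, 0 < G.demand k) ∧
  (∀ e x, (0:ℝ) ≤ x → 0 ≤ G.latency e x) ∧
  (∀ e, MonotoneOn (G.latency e) (Set.Ici (0:ℝ)))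

/-- `G.IsWalkFrom s t l` : the list of edges `l` is a directed walk from `s` to `t`. -/
def IsWalkFrom (G : RoutingInstance V E K) : V → V → List E → Prop
  | s, t, [] => s = t
  | s, t, e :: es => G.src e = s ∧ IsWalkFrom G (G.tgt e) t es

/-- The list of vertices visited by a walk starting at `s`. -/
def walkVerts (G : RoutingInstance V E K) (s : V) (l : List E) : List V :=
  s :: l.map G.tgt

/-- A simple directed path from the source of commodity `k` to its sink. -/
def IsPathOf (G : RoutingInstance V E K) (k : K) (p : List E) : Prop :=
  G.IsWalkFrom (G.source k) (G.sink k) p ∧ (G.walkVerts (G.source k) p).Nodup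

/-- A feasible path flow: nonnegative, supported on simple `s_k`-`t_k` paths,
and routing the whole demand of each commodity. -/
def Feasible (G : RoutingInstance V E K) (f : K → (List E →₀ ℝ)) : Prop :=
  (∀ k p, 0 ≤ f k p) ∧
  (∀ k p, f k p ≠ 0 → G.IsPathOf k p) ∧
  (∀ k, ((f k).sum fun _ v => v) = G.demand k)

/-- Edge flow of commodity `k` induced by a path flow. -/
def edgeFlowK (G : RoutingInstance V E K) (f : K → (List E →₀ ℝ)) (k : K) (e : E) : ℝ :=
  (f k).sum fun p v => if e ∈ p then v else 0

/-- Total edge flow induced by a path flow. -/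
def edgeFlow (G : RoutingInstance V E K) (f : K → (List E →₀ ℝ)) (e : E) : ℝ :=
  ∑ k, G.edgeFlowK f k e

/-- Latency (cost) of a path under the edge flows induced by the path flow `f`. -/
def pathCost (G : RoutingInstance V E K) (f : K → (List E →₀ ℝ)) (p : List E) : ℝ :=
  (p.map fun e => G.latency e (G.edgeFlow f e)).sum

/-- A path is used by commodity `k` if it carries positive flow in `f`. -/
def Used (G : RoutingInstance V E K) (f : K → (List E →₀ ℝ)) (k : K) (p : List E) : Prop :=
  0 < f k p

/-- A path is positive for commodity `k` if each of its edges carries positive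
commodity-`k` flow. -/
def PositivePath (G : RoutingInstance V E K) (f : K → (List E →₀ ℝ)) (k : K) (p : List E) :
    Prop :=
  G.IsPathOf k p ∧ ∀ e ∈ p, 0 < G.edgeFlowK f k e

/-- θ-Positive Nash Equilibrium (a property of the induced edge flow):
every positive path costs at most θ times any path of the same commodity. -/
def IsPNE (G : RoutingInstance V E K) (θ : ℝ) (f : K → (List E →₀ ℝ)) : Prop :=
  ∀ k p q, G.PositivePath f k p → G.IsPathOf k q →
    G.pathCost f p ≤ θ * G.pathCost f q

/-- θ-Used Nash Equilibrium: every used path costs at most θ times any path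
of the same commodity. -/
def IsUNE (G : RoutingInstance V E K) (θ : ℝ) (f : K → (List E →₀ ℝ)) : Prop :=
  ∀ k p q, G.Used f k p → G.IsPathOf k q →
    G.pathCost f p ≤ θ * G.pathCost f q

/-- θ-Envy Free: every used path costs at most θ times any used path
of the same commodity. -/
def IsEF (G : RoutingInstance V E K) (θ : ℝ) (f : K → (List E →₀ ℝ)) : Prop :=
  ∀ k p q, G.Used f k p → G.Used f k q →
    G.pathCost f p ≤ θ * G.pathCost f q

/-- Social cost of a path flow. -/
def socialCost (G : RoutingInstance V E K) (f : K → (List E →₀ ℝ)) : ℝ :=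
  ∑ e, G.edgeFlow f e * G.latency e (G.edgeFlow f e)

end RoutingInstance

/-!
For `σ ≥ 0` let `x` minimise, over feasible flows, the potential `∑ₑ h_σ(xₑ)`, where `h_σ`
interpolates between the Beckmann potential (`σ = 0`) and the social cost (`σ = 1`) and has
derivative `c_σ = ℓ + σ x ℓ'`. First-order optimality is a variational inequality for the edge
costs `c_σ`; it makes every used path `c_σ`-cheapest, and then, through shortest-path distances,
every positive path as well. As `ℓ ≤ c_σ ≤ (1 + σ ρ / (1 - ρ)) ℓ` on `[0, d]`, the flow `x` is a
`θ`-PNE for `σ = (θ - 1)(1 - ρ) / ρ`. If `θ (1 - ρ) ≥ 1` one may take `σ = 1`, and `x` is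
socially optimal. Otherwise a local smoothness inequality for `c_σ` (AM-GM), summed against the
variational inequality, bounds the social cost of `x` by
`(1 + 1 / √(θ (1 - ρ))) / 2` times that of any feasible flow.
-/

theorem nonneg_of_hasDerivAt_of_isMinOn_Icc {φ : ℝ → ℝ} {L : ℝ} (h : HasDerivAt φ L 0)
    (hmin : IsMinOn φ (Set.Icc 0 1) 0) : 0 ≤ L := by
  have hseg : segment ℝ (0 : ℝ) (0 + 1) ⊆ Set.Icc 0 1 := by
    rw [zero_add, segment_eq_Icc zero_le_one]
  simpa using hmin.localize.hasFDerivWithinAt_nonneg h.hasFDerivAt.hasFDerivWithinAt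
    (mem_posTangentConeAt_of_segment_subset hseg)

section MM1

/-- Interpolates between the Beckmann potential `-log (u - x)` of the latency `1 / (u - x)`
(`σ = 0`) and the edge social cost `x / (u - x)` (`σ = 1`). -/
noncomputable def mm1Potential (σ u x : ℝ) : ℝ :=
  -(1 - σ) * Real.log (u - x) + σ * (x / (u - x))

/-- `ℓ x + σ x ℓ' x` for the latency `ℓ x = 1 / (u - x)`. -/
noncomputable def mm1Cost (σ u x : ℝ) : ℝ :=
  1 / (u - x) + σ * x / (u - x) ^ 2

variable {σ u x : ℝ}

theorem hasDerivAt_mm1Potential (σ : ℝ) (hx : x < u) :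
    HasDerivAt (mm1Potential σ u) (mm1Cost σ u x) x := by
  have hux : u - x ≠ 0 := by linarith
  have hsub : HasDerivAt (fun y => u - y) (-1) x := by
    simpa using (hasDerivAt_id x).const_sub u
  refine (((hsub.log hux).const_mul (-(1 - σ))).add
    (((hasDerivAt_id' x).div hsub hux).const_mul σ)).congr_deriv ?_
  rw [mm1Cost]
  field_simp
  ring

theorem mm1Potential_one (u x : ℝ) : mm1Potential 1 u x = x / (u - x) := by
  simp [mm1Potential]

theorem one_div_le_mm1Cost (hσ : 0 ≤ σ) (hx : 0 ≤ x) (hxu : x < u) :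
    1 / (u - x) ≤ mm1Cost σ u x := by
  have : 0 ≤ σ * x / (u - x) ^ 2 := by positivity
  simp only [mm1Cost]
  linarith

theorem div_sub_le_div_sub {d umin : ℝ} (hx : 0 ≤ x) (hxd : x ≤ d) (hd : d < umin)
    (hu : umin ≤ u) : x / (u - x) ≤ d / (umin - d) := by
  rw [div_le_div_iff₀ (by linarith) (by linarith)]
  nlinarith

theorem mm1Cost_le {d umin : ℝ} (hσ : 0 ≤ σ) (hx : 0 ≤ x) (hxd : x ≤ d) (hd : d < umin)
    (hu : umin ≤ u) : mm1Cost σ u x ≤ (1 + σ * d / (umin - d)) * (1 / (u - x)) := by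
  have hux : 0 < u - x := by linarith
  have hs := div_sub_le_div_sub hx hxd hd hu
  have hsplit : mm1Cost σ u x = (1 + σ * (x / (u - x))) * (1 / (u - x)) := by
    simp only [mm1Cost]
    field_simp
  rw [hsplit, mul_div_assoc]
  gcongr

/-- With `s = x / (u - x)` and `c = mm1Cost σ u x`, `hpar` gives
`u c = (1 + s) (1 + σ s) ≥ (1 + (σ + a) s / 2) ^ 2`; then AM-GM for `(u - y) c` and `u / (u - y)`,
whose product is `u c`, bounds `y c - y / (u - y)`. -/
theorem mul_mm1Cost_le {y a S : ℝ} (hσ : 0 ≤ σ) (ha : a ≤ 1) (hx : 0 ≤ x) (hxu : x < u)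
    (hyu : y < u) (hS : x / (u - x) ≤ S) (hpar : S * ((σ + a) ^ 2 - 4 * σ) ≤ 4 * (1 - a)) :
    y * mm1Cost σ u x ≤ y / (u - y) + x * mm1Cost σ u x - a * (x / (u - x)) := by
  have hux : 0 < u - x := by linarith
  have huy : 0 < u - y := by linarith
  set s := x / (u - x)
  have hs0 : 0 ≤ s := by positivity
  set c := mm1Cost σ u x
  have hc0 : 0 ≤ c := (one_div_nonneg.2 hux.le).trans (one_div_le_mm1Cost hσ hx hxu)
  have huc : u * c = (1 + s) * (1 + σ * s) := by
    simp only [c, s, mm1Cost]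
    field_simp
    ring
  have hxc : x * c = s + σ * s ^ 2 := by
    simp only [c, s, mm1Cost]
    field_simp
  have hbracket : s ^ 2 * ((σ + a) ^ 2 - 4 * σ) ≤ 4 * s * (1 - a) := by
    rcases le_or_gt ((σ + a) ^ 2 - 4 * σ) 0 with h | h
    · nlinarith
    · nlinarith [mul_le_mul_of_nonneg_right hS h.le]
  set P := (u - y) * c
  set Q := u / (u - y)
  have hPQ : P * Q = u * c := by
    simp only [P, Q]
    field_simp
  have hamgm : 2 + (σ + a) * s ≤ P + Q := by
    have hP : 0 ≤ P := by positivity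
    have hQ : 0 ≤ Q := div_nonneg (by linarith) huy.le
    nlinarith [sq_nonneg (P - Q)]
  have hy : y * c - y / (u - y) = u * c + 1 - (P + Q) := by
    simp only [P, Q]
    field_simp
    ring
  nlinarith

end MM1

/-- The choice of `σ` and of the smoothness constant `a` in terms of `t = √(θ (1 - ρ))`. -/
theorem smoothness_param {ρ t : ℝ} (hρ0 : 0 < ρ) (hρ1 : ρ < 1) (ht0 : 0 < t) (ht1 : t ≤ 1)
    (hρt : 1 - ρ ≤ t ^ 2) :
    ρ / (1 - ρ) * (((t ^ 2 - (1 - ρ)) / ρ + 2 * t / (1 + t)) ^ 2 - 4 * ((t ^ 2 - (1 - ρ)) / ρ))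
      ≤ 4 * (1 - 2 * t / (1 + t)) := by
  have h1ρ : 0 < 1 - ρ := by linarith
  have key : 4 * (1 - 2 * t / (1 + t)) - ρ / (1 - ρ) *
      (((t ^ 2 - (1 - ρ)) / ρ + 2 * t / (1 + t)) ^ 2 - 4 * ((t ^ 2 - (1 - ρ)) / ρ)) =
      (t ^ 2 - (1 - ρ)) * ((1 - t) ^ 2 * (1 - ρ) + t * (1 - t) * (t ^ 2 + 3 * t + 4)) /
        ((1 - ρ) * (1 + t) ^ 2 * ρ) := by
    field_simp
    ring
  have hnum : 0 ≤ (t ^ 2 - (1 - ρ)) * ((1 - t) ^ 2 * (1 - ρ) + t * (1 - t) * (t ^ 2 + 3 * t + 4)) :=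
    mul_nonneg (by linarith) (add_nonneg (by positivity)
      (mul_nonneg (mul_nonneg ht0.le (by linarith)) (by positivity)))
  linarith [div_nonneg hnum (by positivity : (0 : ℝ) ≤ (1 - ρ) * (1 + t) ^ 2 * ρ)]

namespace RoutingInstance

section Walks

variable {V E K : Type*} (G : RoutingInstance V E K)

theorem isWalkFrom_append {s t : V} {l₁ l₂ : List E} :
    G.IsWalkFrom s t (l₁ ++ l₂) ↔ ∃ m, G.IsWalkFrom s m l₁ ∧ G.IsWalkFrom m t l₂ := by
  induction l₁ generalizing s with
  | nil => exact ⟨fun h => ⟨s, rfl, h⟩, fun ⟨_, hm, h⟩ => hm ▸ h⟩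
  | cons e es ih =>
    simp only [List.cons_append, IsWalkFrom, ih]
    exact ⟨fun ⟨hs, m, h₁, h₂⟩ => ⟨m, ⟨hs, h₁⟩, h₂⟩, fun ⟨m, ⟨hs, h₁⟩, h₂⟩ => ⟨hs, m, h₁, h₂⟩⟩

theorem nodup_of_nodup_walkVerts {s : V} {l : List E} (h : (G.walkVerts s l).Nodup) :
    l.Nodup :=
  (List.nodup_cons.1 h).2.of_map _

variable {γ : E → ℝ}

theorem exists_suffix_of_mem_walkVerts (hγ : ∀ e, 0 ≤ γ e) {l : List E} {a v w : V}
    (hl : G.IsWalkFrom a v l) (hnd : (G.walkVerts a l).Nodup) (hw : w ∈ G.walkVerts a l) :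
    ∃ l', G.IsWalkFrom w v l' ∧ (G.walkVerts w l').Nodup ∧ (l'.map γ).sum ≤ (l.map γ).sum := by
  induction l generalizing a with
  | nil =>
    obtain rfl : w = a := by simpa [walkVerts] using hw
    exact ⟨[], hl, hnd, le_rfl⟩
  | cons e es ih =>
    rcases List.mem_cons.1 hw with rfl | hw
    · exact ⟨e :: es, hl, hnd, le_rfl⟩
    · obtain ⟨l', hwalk, hnd', hcost⟩ := ih hl.2 (List.nodup_cons.1 hnd).2 hw
      refine ⟨l', hwalk, hnd', hcost.trans ?_⟩
      simpa using hγ e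

theorem exists_simple_of_isWalkFrom (hγ : ∀ e, 0 ≤ γ e) {l : List E} {s t : V}
    (hl : G.IsWalkFrom s t l) :
    ∃ l', G.IsWalkFrom s t l' ∧ (G.walkVerts s l').Nodup ∧ (l'.map γ).sum ≤ (l.map γ).sum := by
  induction l generalizing s with
  | nil => exact ⟨[], hl, by simp [walkVerts], le_rfl⟩
  | cons e es ih =>
    obtain ⟨l', hwalk, hnd, hcost⟩ := ih hl.2
    by_cases hs : s ∈ G.walkVerts (G.tgt e) l'
    · obtain ⟨l'', hwalk', hnd', hcost'⟩ := G.exists_suffix_of_mem_walkVerts hγ hwalk hnd hs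
      refine ⟨l'', hwalk', hnd', ?_⟩
      simp only [List.map_cons, List.sum_cons]
      linarith [hγ e]
    · refine ⟨e :: l', ⟨hl.1, hwalk⟩, List.nodup_cons.2 ⟨hs, hnd⟩, ?_⟩
      simpa using hcost

noncomputable def walkDist (γ : E → ℝ) (s v : V) : ℝ :=
  sInf ((fun l => (l.map γ).sum) '' {l | G.IsWalkFrom s v l})

theorem walkDist_le (hγ : ∀ e, 0 ≤ γ e) {s v : V} {l : List E} (hl : G.IsWalkFrom s v l) :
    G.walkDist γ s v ≤ (l.map γ).sum := by
  refine csInf_le ⟨0, ?_⟩ ⟨l, hl, rfl⟩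
  rintro _ ⟨l', -, rfl⟩
  exact List.sum_nonneg (by simpa using fun e _ => hγ e)

theorem le_walkDist {s v : V} {c : ℝ} (hne : ∃ l, G.IsWalkFrom s v l)
    (h : ∀ l, G.IsWalkFrom s v l → c ≤ (l.map γ).sum) : c ≤ G.walkDist γ s v := by
  obtain ⟨l, hl⟩ := hne
  refine le_csInf ⟨_, l, hl, rfl⟩ ?_
  rintro _ ⟨l', hl', rfl⟩
  exact h l' hl'

theorem walkDist_add_le_of_mem (hγ : ∀ e, 0 ≤ γ e) {s t : V} {r : List E}
    (hr : G.IsWalkFrom s t r) (hmin : ∀ w, G.IsWalkFrom s t w → (r.map γ).sum ≤ (w.map γ).sum)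
    {e : E} (he : e ∈ r) :
    G.walkDist γ s (G.src e) + γ e ≤ G.walkDist γ s (G.tgt e) := by
  obtain ⟨r₁, r₂, rfl⟩ := List.append_of_mem he
  obtain ⟨m, hr₁, hsrc, hr₂⟩ := (G.isWalkFrom_append).1 hr
  subst hsrc
  have hr₁e : G.IsWalkFrom s (G.tgt e) (r₁ ++ [e]) :=
    (G.isWalkFrom_append).2 ⟨G.src e, hr₁, rfl, rfl⟩
  have hdist : (r₁.map γ).sum + γ e + (r₂.map γ).sum ≤
      G.walkDist γ s (G.tgt e) + (r₂.map γ).sum := by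
    rw [← sub_le_iff_le_add]
    refine G.le_walkDist ⟨_, hr₁e⟩ fun w hw => ?_
    have := hmin (w ++ r₂) ((G.isWalkFrom_append).2 ⟨_, hw, hr₂⟩)
    simp only [List.map_append, List.sum_append, List.map_cons, List.sum_cons] at this
    linarith
  linarith [G.walkDist_le hγ hr₁]

theorem walkDist_add_sum_le {s a b : V} {p : List E} (hp : G.IsWalkFrom a b p)
    (htight : ∀ e ∈ p, G.walkDist γ s (G.src e) + γ e ≤ G.walkDist γ s (G.tgt e)) :
    G.walkDist γ s a + (p.map γ).sum ≤ G.walkDist γ s b := by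
  induction p generalizing a with
  | nil => obtain rfl : a = b := hp; simp
  | cons e es ih =>
    have h₁ := htight e List.mem_cons_self
    have h₂ := ih hp.2 fun e' he' => htight e' (List.mem_cons_of_mem e he')
    rw [hp.1] at h₁
    simp only [List.map_cons, List.sum_cons]
    linarith

/-- Every edge of `p` is tight for the distance from `s`, so that distance telescopes along `p`. -/
theorem sum_le_of_forall_mem_cheapest (hγ : ∀ e, 0 ≤ γ e) {s t : V} {p : List E}
    (hp : G.IsWalkFrom s t p)
    (hcover : ∀ e ∈ p, ∃ r, G.IsWalkFrom s t r ∧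
      (∀ w, G.IsWalkFrom s t w → (r.map γ).sum ≤ (w.map γ).sum) ∧ e ∈ r)
    {q : List E} (hq : G.IsWalkFrom s t q) : (p.map γ).sum ≤ (q.map γ).sum := by
  have htel := G.walkDist_add_sum_le (s := s) hp fun e he => by
    obtain ⟨r, hr, hmin, her⟩ := hcover e he
    exact G.walkDist_add_le_of_mem hγ hr hmin her
  have hs : 0 ≤ G.walkDist γ s s := G.le_walkDist ⟨[], rfl⟩ fun l _ =>
    List.sum_nonneg (by simpa using fun e _ => hγ e)
  linarith [G.walkDist_le hγ hq]

variable {G}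

theorem IsPathOf.nodup {k : K} {p : List E} (hp : G.IsPathOf k p) : p.Nodup :=
  G.nodup_of_nodup_walkVerts hp.2

end Walks

section Coordinates

variable {V E K : Type*} [Fintype E] (G : RoutingInstance V E K)

/-- Path flows are coordinatised by this finite type, which contains every simple path. -/
abbrev NodupList (E : Type*) := {l : List E // l.Nodup}

noncomputable def pathFlowOf (ω : K → NodupList E → ℝ) : K → (List E →₀ ℝ) :=
  fun k => ∑ n, Finsupp.single n.1 (ω k n)

def FeasibleCoords (ω : K → NodupList E → ℝ) : Prop :=
  (∀ k n, 0 ≤ ω k n) ∧ (∀ k n, ω k n ≠ 0 → G.IsPathOf k n.1) ∧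
    ∀ k, ∑ n, ω k n = G.demand k

def load [DecidableEq E] [Fintype K] (ω : K → NodupList E → ℝ) (e : E) : ℝ :=
  ∑ k, ∑ n with e ∈ n.1, ω k n

theorem pathFlowOf_apply_coe (ω : K → NodupList E → ℝ) (k : K) (n : NodupList E) :
    pathFlowOf ω k n.1 = ω k n := by
  rw [pathFlowOf, Finsupp.finsetSum_apply, Finset.sum_eq_single n]
  · simp
  · exact fun m _ hmn => Finsupp.single_eq_of_ne (fun h => hmn (Subtype.ext h).symm)
  · simp

theorem pathFlowOf_apply_of_not_nodup (ω : K → NodupList E → ℝ) (k : K) {l : List E}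
    (hl : ¬ l.Nodup) : pathFlowOf ω k l = 0 := by
  rw [pathFlowOf, Finsupp.finsetSum_apply]
  exact Finset.sum_eq_zero fun n _ => Finsupp.single_eq_of_ne fun h => hl (h ▸ n.2)

theorem finsupp_sum_eq_sum_nodupList {F : List E →₀ ℝ} (hF : ∀ l, F l ≠ 0 → l.Nodup)
    (g : List E → ℝ → ℝ) (hg : ∀ l, g l 0 = 0) :
    F.sum g = ∑ n : NodupList E, g n.1 (F n.1) := by
  classical
  rw [Finsupp.sum, ← Finset.sum_image (s := Finset.univ) (f := fun l => g l (F l))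
    fun _ _ _ _ => Subtype.ext]
  refine Finset.sum_subset (fun l hl => ?_) fun l _ hl => ?_
  · exact Finset.mem_image.2 ⟨⟨l, hF l (Finsupp.mem_support_iff.1 hl)⟩, Finset.mem_univ _, rfl⟩
  · rw [Finsupp.notMem_support_iff.1 hl, hg]

theorem nodup_of_pathFlowOf_ne_zero {ω : K → NodupList E → ℝ} {k : K} {l : List E}
    (hl : pathFlowOf ω k l ≠ 0) : l.Nodup := by
  by_contra h
  exact hl (pathFlowOf_apply_of_not_nodup ω k h)

theorem edgeFlowK_pathFlowOf [DecidableEq E] (ω : K → NodupList E → ℝ) (k : K) (e : E) :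
    G.edgeFlowK (pathFlowOf ω) k e = ∑ n with e ∈ n.1, ω k n := by
  rw [edgeFlowK, finsupp_sum_eq_sum_nodupList (fun _ => nodup_of_pathFlowOf_ne_zero)
    (fun l v => if e ∈ l then v else 0) fun _ => ite_self 0, Finset.sum_filter]
  simp only [pathFlowOf_apply_coe]

theorem edgeFlow_pathFlowOf [DecidableEq E] [Fintype K] (ω : K → NodupList E → ℝ) (e : E) :
    G.edgeFlow (pathFlowOf ω) e = load ω e :=
  Finset.sum_congr rfl fun k _ => G.edgeFlowK_pathFlowOf ω k e

theorem feasible_pathFlowOf {ω : K → NodupList E → ℝ} (hω : G.FeasibleCoords ω) :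
    G.Feasible (pathFlowOf ω) := by
  refine ⟨fun k l => ?_, fun k l hl => ?_, fun k => ?_⟩
  · by_cases h : l.Nodup
    · simpa only [← pathFlowOf_apply_coe ω k ⟨l, h⟩] using hω.1 k ⟨l, h⟩
    · rw [pathFlowOf_apply_of_not_nodup ω k h]
  · have h := nodup_of_pathFlowOf_ne_zero hl
    rw [← Subtype.coe_mk l h, pathFlowOf_apply_coe] at hl
    exact hω.2.1 k ⟨l, h⟩ hl
  · rw [finsupp_sum_eq_sum_nodupList (fun _ => nodup_of_pathFlowOf_ne_zero) _ fun _ => rfl,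
      ← hω.2.2 k]
    simp only [pathFlowOf_apply_coe]

variable {G}

theorem Feasible.exists_coords {f : K → (List E →₀ ℝ)} (hf : G.Feasible f) :
    ∃ ω, G.FeasibleCoords ω ∧ pathFlowOf ω = f := by
  have hnodup : ∀ k l, f k l ≠ 0 → l.Nodup := fun k l hl => (hf.2.1 k l hl).nodup
  refine ⟨fun k n => f k n.1, ⟨fun k n => hf.1 k _, fun k n => hf.2.1 k _, fun k => ?_⟩, ?_⟩
  · rw [← hf.2.2 k, finsupp_sum_eq_sum_nodupList (hnodup k) _ fun _ => rfl]
  · ext k l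
    by_cases h : l.Nodup
    · exact pathFlowOf_apply_coe _ k ⟨l, h⟩
    · rw [pathFlowOf_apply_of_not_nodup _ k h]
      by_contra hl
      exact h (hnodup k l (Ne.symm hl))

end Coordinates

section FeasibleSet

variable {V E K : Type*} [Fintype E] (G : RoutingInstance V E K)

theorem convex_setOf_feasibleCoords : Convex ℝ {ω : K → NodupList E → ℝ | G.FeasibleCoords ω} := by
  intro ω hω η hη a b ha hb hab
  refine ⟨fun k n => ?_, fun k n hne => ?_, fun k => ?_⟩
  · simp only [Pi.add_apply, Pi.smul_apply, smul_eq_mul]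
    exact add_nonneg (mul_nonneg ha (hω.1 k n)) (mul_nonneg hb (hη.1 k n))
  · by_cases h : ω k n = 0
    · refine hη.2.1 k n fun h' => hne ?_
      simp [h, h']
    · exact hω.2.1 k n h
  · simp only [Pi.add_apply, Pi.smul_apply, smul_eq_mul, Finset.sum_add_distrib,
      ← Finset.mul_sum, hω.2.2, hη.2.2, ← add_mul, hab, one_mul]

theorem isCompact_setOf_feasibleCoords :
    IsCompact {ω : K → NodupList E → ℝ | G.FeasibleCoords ω} := by
  refine (isCompact_Icc (a := 0) (b := fun k _ => G.demand k)).of_isClosed_subset ?_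
    fun ω hω => ⟨hω.1, fun k n =>
      (Finset.single_le_sum (fun n _ => hω.1 k n) (Finset.mem_univ n)).trans_eq (hω.2.2 k)⟩
  have hsupp : ∀ k n, IsClosed {ω : K → NodupList E → ℝ | ω k n ≠ 0 → G.IsPathOf k n.1} := by
    intro k n
    simp only [imp_iff_not_or, not_not, Set.ofPred_or]
    exact (isClosed_eq (by fun_prop) continuous_const).union isClosed_const
  simp only [FeasibleCoords, Set.ofPred_and, Set.ofPred_forall]
  exact (isClosed_iInter fun k => isClosed_iInter fun n => isClosed_le continuous_const
    (by fun_prop)).inter ((isClosed_iInter fun k => isClosed_iInter (hsupp k)).inter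
    (isClosed_iInter fun k => isClosed_eq (by fun_prop) continuous_const))

variable [DecidableEq E] [Fintype K]

theorem load_add_smul (ω η : K → NodupList E → ℝ) (t : ℝ) (e : E) :
    load (ω + t • η) e = load ω e + t * load η e := by
  simp only [load, Pi.add_apply, Pi.smul_apply, smul_eq_mul, Finset.sum_add_distrib,
    Finset.mul_sum]

theorem load_sub (ω η : K → NodupList E → ℝ) (e : E) :
    load (ω - η) e = load ω e - load η e := by
  simp only [load, Pi.sub_apply, Finset.sum_sub_distrib]

theorem load_single [DecidableEq K] (k : K) (n : NodupList E) (e : E) :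
    load (Pi.single k (Pi.single n 1)) e = if e ∈ n.1 then 1 else 0 := by
  rw [load, Finset.sum_eq_single k (fun b _ hb => by simp [hb]) (by simp)]
  simp [Pi.single_apply]

variable {G}

theorem FeasibleCoords.load_nonneg {ω : K → NodupList E → ℝ} (hω : G.FeasibleCoords ω)
    (e : E) : 0 ≤ load ω e :=
  Finset.sum_nonneg fun k _ => Finset.sum_nonneg fun n _ => hω.1 k n

theorem FeasibleCoords.load_le {ω : K → NodupList E → ℝ} (hω : G.FeasibleCoords ω) (e : E) :
    load ω e ≤ ∑ k, G.demand k :=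
  Finset.sum_le_sum fun k _ => (hω.2.2 k).symm ▸
    Finset.sum_le_sum_of_subset_of_nonneg (Finset.filter_subset _ _) fun n _ _ => hω.1 k n

variable (G)

theorem exists_isMinOn_sum_load (H : E → ℝ → ℝ)
    (hH : ∀ e, ContinuousOn (H e) (Set.Icc 0 (∑ k, G.demand k)))
    (hne : ∃ ω, G.FeasibleCoords ω) :
    ∃ ω₀, G.FeasibleCoords ω₀ ∧
      IsMinOn (fun ω => ∑ e, H e (load ω e)) {ω | G.FeasibleCoords ω} ω₀ := by
  refine G.isCompact_setOf_feasibleCoords.exists_isMinOn hne ?_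
  refine continuousOn_finsetSum _ fun e _ =>
    (hH e).comp ?_ fun ω hω => ⟨hω.load_nonneg e, hω.load_le e⟩
  unfold load
  fun_prop

theorem sum_mul_load_sub_nonneg_of_isMinOn (H : E → ℝ → ℝ) (g : E → ℝ)
    {ω₀ ω : K → NodupList E → ℝ} (hω₀ : G.FeasibleCoords ω₀) (hω : G.FeasibleCoords ω)
    (hmin : IsMinOn (fun ω => ∑ e, H e (load ω e)) {ω | G.FeasibleCoords ω} ω₀)
    (hH : ∀ e, HasDerivAt (H e) (g e) (load ω₀ e)) :
    0 ≤ ∑ e, g e * (load ω e - load ω₀ e) := by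
  refine nonneg_of_hasDerivAt_of_isMinOn_Icc
    (φ := fun t => ∑ e, H e (load ω₀ e + t * (load ω e - load ω₀ e)))
    (HasDerivAt.fun_sum fun e _ => ?_) fun t ht => ?_
  · have hlin : HasDerivAt (fun t => load ω₀ e + t * (load ω e - load ω₀ e))
        (load ω e - load ω₀ e) 0 := by
      simpa using ((hasDerivAt_id (0 : ℝ)).mul_const (load ω e - load ω₀ e)).const_add (load ω₀ e)
    exact (hH e).comp_of_eq (0 : ℝ) hlin (by simp)
  · have hmem := (G.convex_setOf_feasibleCoords).add_smul_sub_mem hω₀ hω ht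
    simpa [load_add_smul, load_sub] using hmin hmem

end FeasibleSet

section Wardrop

variable {V E K : Type*} [Fintype E] [DecidableEq E] {G : RoutingInstance V E K}

theorem sum_map_eq_sum_ite (g : E → ℝ) {l : List E} (hl : l.Nodup) :
    (l.map g).sum = ∑ e, if e ∈ l then g e else 0 := by
  rw [← List.sum_toFinset g hl, ← Finset.sum_filter]
  congr 1
  ext e
  simp

theorem FeasibleCoords.shift [DecidableEq K] {ω : K → NodupList E → ℝ}
    (hω : G.FeasibleCoords ω) {k : K} (np : NodupList E) {nq : NodupList E}
    (hq : G.IsPathOf k nq.1) :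
    G.FeasibleCoords
      (ω + ω k np • (Pi.single k (Pi.single nq 1) - Pi.single k (Pi.single np 1))) := by
  have happly : ∀ k' n, (ω + ω k np • (Pi.single k (Pi.single nq 1) -
      Pi.single k (Pi.single np 1)) : K → NodupList E → ℝ) k' n = ω k' n +
        if k' = k then ω k np * ((if n = nq then 1 else 0) - if n = np then 1 else 0) else 0 := by
    intro k' n
    by_cases hk : k' = k
    · subst hk; simp [Pi.single_apply]
    · simp [hk]
  refine ⟨fun k' n => ?_, fun k' n hne => ?_, fun k' => ?_⟩
  · have h₁ := hω.1 k' n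
    have h₂ := hω.1 k np
    rw [happly]
    split_ifs with hk hnq hnp hnp <;> (try subst hk) <;> (try subst hnp) <;> nlinarith
  · rw [happly] at hne
    split_ifs at hne with hk hnq hnp hnp
    · exact hk ▸ hnq ▸ hq
    · exact hk ▸ hnq ▸ hq
    · subst hk hnp; exact absurd (by ring) hne
    · exact hω.2.1 _ _ (by simpa using hne)
    · exact hω.2.1 _ _ (by simpa using hne)
  · simp only [happly, Finset.sum_add_distrib, hω.2.2, add_eq_left]
    split_ifs <;> simp [← Finset.mul_sum, Finset.sum_sub_distrib]

theorem exists_pos_of_edgeFlowK_pathFlowOf_pos {ω : K → NodupList E → ℝ} {k : K} {e : E}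
    (h : 0 < G.edgeFlowK (pathFlowOf ω) k e) : ∃ n : NodupList E, e ∈ n.1 ∧ 0 < ω k n := by
  rw [edgeFlowK_pathFlowOf] at h
  by_contra hne
  simp only [not_exists, not_and, not_lt] at hne
  exact h.not_ge (Finset.sum_nonpos fun n hn => hne n (Finset.mem_filter.1 hn).2)

variable [Fintype K] {ω₀ : K → NodupList E → ℝ}

theorem FeasibleCoords.sum_map_le_of_pos (hω₀ : G.FeasibleCoords ω₀) (g : E → ℝ)
    (hVI : ∀ ω, G.FeasibleCoords ω → 0 ≤ ∑ e, g e * (load ω e - load ω₀ e))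
    {k : K} {np : NodupList E} (hp : 0 < ω₀ k np) {q : List E} (hq : G.IsPathOf k q) :
    (np.1.map g).sum ≤ (q.map g).sum := by
  classical
  have h := hVI _ (hω₀.shift np (nq := ⟨q, hq.nodup⟩) hq)
  have hsum : ∑ e, g e * (load (ω₀ + ω₀ k np • (Pi.single k (Pi.single ⟨q, hq.nodup⟩ 1) -
      Pi.single k (Pi.single np 1))) e - load ω₀ e) =
      ω₀ k np * ((∑ e, if e ∈ q then g e else 0) - ∑ e, if e ∈ np.1 then g e else 0) := by
    simp only [load_add_smul, load_sub, load_single, add_sub_cancel_left, Finset.mul_sum,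
      ← Finset.sum_sub_distrib]
    refine Finset.sum_congr rfl fun e _ => ?_
    split_ifs <;> ring
  rw [hsum] at h
  rw [sum_map_eq_sum_ite g np.2, sum_map_eq_sum_ite g hq.nodup, ← sub_nonneg]
  exact (mul_nonneg_iff_of_pos_left hp).1 h

/-- The edges of a positive path lie on used paths, which are cheapest by the variational
inequality. -/
theorem FeasibleCoords.sum_map_le_of_positivePath (hω₀ : G.FeasibleCoords ω₀) (g : E → ℝ)
    (hg : ∀ e, 0 ≤ g e) (hVI : ∀ ω, G.FeasibleCoords ω → 0 ≤ ∑ e, g e * (load ω e - load ω₀ e))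
    {k : K} {p q : List E} (hp : G.PositivePath (pathFlowOf ω₀) k p) (hq : G.IsPathOf k q) :
    (p.map g).sum ≤ (q.map g).sum := by
  refine G.sum_le_of_forall_mem_cheapest hg hp.1.1 (fun e he => ?_) hq.1
  obtain ⟨n, hen, hn⟩ := exists_pos_of_edgeFlowK_pathFlowOf_pos (hp.2 e he)
  refine ⟨n.1, (hω₀.2.1 k n hn.ne').1, fun w hw => ?_, hen⟩
  obtain ⟨w', hw', hnd, hcost⟩ := G.exists_simple_of_isWalkFrom hg hw
  exact (hω₀.sum_map_le_of_pos g hVI hn ⟨hw', hnd⟩).trans hcost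

end Wardrop

section MM1Routing

variable {V E K : Type*} [Fintype E] [DecidableEq E] [Fintype K] {G : RoutingInstance V E K}
  {u : E → ℝ} {umin σ : ℝ} {ω₀ ω : K → NodupList E → ℝ}

theorem FeasibleCoords.pathCost_pathFlowOf
    (hlat : ∀ e x, 0 ≤ x → x ≤ ∑ k, G.demand k → G.latency e x = 1 / (u e - x))
    (hω : G.FeasibleCoords ω) (p : List E) :
    G.pathCost (pathFlowOf ω) p = (p.map fun e => 1 / (u e - load ω e)).sum := by
  simp only [pathCost, edgeFlow_pathFlowOf, hlat _ _ (hω.load_nonneg _) (hω.load_le _)]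

theorem FeasibleCoords.socialCost_pathFlowOf
    (hlat : ∀ e x, 0 ≤ x → x ≤ ∑ k, G.demand k → G.latency e x = 1 / (u e - x))
    (hω : G.FeasibleCoords ω) :
    G.socialCost (pathFlowOf ω) = ∑ e, load ω e / (u e - load ω e) := by
  simp only [socialCost, edgeFlow_pathFlowOf, hlat _ _ (hω.load_nonneg _) (hω.load_le _),
    mul_one_div]

theorem FeasibleCoords.load_lt (hu : ∀ e, umin ≤ u e) (hd : ∑ k, G.demand k < umin)
    (hω : G.FeasibleCoords ω) (e : E) : load ω e < u e :=
  ((hω.load_le e).trans_lt hd).trans_le (hu e)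

theorem exists_isMinOn_mm1Potential (hu : ∀ e, umin ≤ u e) (hd : ∑ k, G.demand k < umin)
    (hne : ∃ ω, G.FeasibleCoords ω) (σ : ℝ) :
    ∃ ω₀, G.FeasibleCoords ω₀ ∧ IsMinOn (fun ω => ∑ e, mm1Potential σ (u e) (load ω e))
      {ω | G.FeasibleCoords ω} ω₀ :=
  G.exists_isMinOn_sum_load _ (fun e _ hx => (hasDerivAt_mm1Potential σ
    (hx.2.trans_lt (hd.trans_le (hu e)))).continuousAt.continuousWithinAt) hne

theorem FeasibleCoords.mm1_variational (hu : ∀ e, umin ≤ u e) (hd : ∑ k, G.demand k < umin)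
    (hω₀ : G.FeasibleCoords ω₀)
    (hmin : IsMinOn (fun ω => ∑ e, mm1Potential σ (u e) (load ω e)) {ω | G.FeasibleCoords ω} ω₀)
    (hω : G.FeasibleCoords ω) :
    0 ≤ ∑ e, mm1Cost σ (u e) (load ω₀ e) * (load ω e - load ω₀ e) :=
  G.sum_mul_load_sub_nonneg_of_isMinOn _ _ hω₀ hω hmin fun e =>
    hasDerivAt_mm1Potential σ (hω₀.load_lt hu hd e)

theorem FeasibleCoords.isPNE_of_isMinOn_mm1Potential {θ : ℝ} (hu : ∀ e, umin ≤ u e)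
    (hd : ∑ k, G.demand k < umin)
    (hlat : ∀ e x, 0 ≤ x → x ≤ ∑ k, G.demand k → G.latency e x = 1 / (u e - x))
    (hσ : 0 ≤ σ) (hθ : 1 + σ * (∑ k, G.demand k) / (umin - ∑ k, G.demand k) ≤ θ)
    (hω₀ : G.FeasibleCoords ω₀)
    (hmin : IsMinOn (fun ω => ∑ e, mm1Potential σ (u e) (load ω e)) {ω | G.FeasibleCoords ω} ω₀) :
    G.IsPNE θ (pathFlowOf ω₀) := by
  intro k p q hp hq
  have hlt := hω₀.load_lt hu hd
  have hℓ : ∀ e, 0 ≤ 1 / (u e - load ω₀ e) := fun e => one_div_nonneg.2 (sub_pos.2 (hlt e)).le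
  have hc : ∀ e, 1 / (u e - load ω₀ e) ≤ mm1Cost σ (u e) (load ω₀ e) := fun e =>
    one_div_le_mm1Cost hσ (hω₀.load_nonneg e) (hlt e)
  rw [hω₀.pathCost_pathFlowOf hlat, hω₀.pathCost_pathFlowOf hlat]
  calc (p.map fun e => 1 / (u e - load ω₀ e)).sum
      ≤ (p.map fun e => mm1Cost σ (u e) (load ω₀ e)).sum := List.sum_le_sum fun e _ => hc e
    _ ≤ (q.map fun e => mm1Cost σ (u e) (load ω₀ e)).sum :=
      hω₀.sum_map_le_of_positivePath _ (fun e => (hℓ e).trans (hc e))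
        (fun ω hω => hω₀.mm1_variational hu hd hmin hω) hp hq
    _ ≤ (q.map fun e => (1 + σ * (∑ k, G.demand k) / (umin - ∑ k, G.demand k)) *
          (1 / (u e - load ω₀ e))).sum :=
      List.sum_le_sum fun e _ => mm1Cost_le hσ (hω₀.load_nonneg e) (hω₀.load_le e) hd (hu e)
    _ ≤ θ * (q.map fun e => 1 / (u e - load ω₀ e)).sum := by
      rw [List.sum_map_mul_left]
      exact mul_le_mul_of_nonneg_right hθ (List.sum_nonneg (by simpa using fun e _ => hℓ e))

theorem FeasibleCoords.mul_socialCost_le_of_isMinOn_mm1Potential {a : ℝ}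
    (hu : ∀ e, umin ≤ u e) (hd : ∑ k, G.demand k < umin)
    (hlat : ∀ e x, 0 ≤ x → x ≤ ∑ k, G.demand k → G.latency e x = 1 / (u e - x))
    (hσ : 0 ≤ σ) (ha : a ≤ 1)
    (hpar : (∑ k, G.demand k) / (umin - ∑ k, G.demand k) * ((σ + a) ^ 2 - 4 * σ) ≤ 4 * (1 - a))
    (hω₀ : G.FeasibleCoords ω₀)
    (hmin : IsMinOn (fun ω => ∑ e, mm1Potential σ (u e) (load ω e)) {ω | G.FeasibleCoords ω} ω₀)
    (hω : G.FeasibleCoords ω) :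
    a * G.socialCost (pathFlowOf ω₀) ≤ G.socialCost (pathFlowOf ω) := by
  rw [hω₀.socialCost_pathFlowOf hlat, hω.socialCost_pathFlowOf hlat, Finset.mul_sum,
    ← sub_nonneg, ← Finset.sum_sub_distrib]
  refine (hω₀.mm1_variational hu hd hmin hω).trans (Finset.sum_le_sum fun e _ => ?_)
  have := mul_mm1Cost_le hσ ha (hω₀.load_nonneg e) (hω₀.load_lt hu hd e) (hω.load_lt hu hd e)
    (div_sub_le_div_sub (hω₀.load_nonneg e) (hω₀.load_le e) hd (hu e)) hpar
  linarith

theorem FeasibleCoords.socialCost_le_of_isMinOn_mm1Potential_one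
    (hlat : ∀ e x, 0 ≤ x → x ≤ ∑ k, G.demand k → G.latency e x = 1 / (u e - x))
    (hω₀ : G.FeasibleCoords ω₀)
    (hmin : IsMinOn (fun ω => ∑ e, mm1Potential 1 (u e) (load ω e)) {ω | G.FeasibleCoords ω} ω₀)
    (hω : G.FeasibleCoords ω) :
    G.socialCost (pathFlowOf ω₀) ≤ G.socialCost (pathFlowOf ω) := by
  rw [hω₀.socialCost_pathFlowOf hlat, hω.socialCost_pathFlowOf hlat]
  simpa only [mm1Potential_one] using isMinOn_iff.1 hmin ω hω

end MM1Routing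

section Main

variable {V E K : Type*} [Fintype E] [DecidableEq E] [Fintype K] {G : RoutingInstance V E K}
  {u : E → ℝ} {umin θ : ℝ}

theorem exists_optimal_isPNE (humin : 0 < umin) (hu : ∀ e, umin ≤ u e)
    (hd : ∑ k, G.demand k < umin)
    (hlat : ∀ e x, 0 ≤ x → x ≤ ∑ k, G.demand k → G.latency e x = 1 / (u e - x))
    (hfeas : ∃ f, G.Feasible f) (hθ : 1 ≤ θ * (1 - (∑ k, G.demand k) / umin)) :
    ∃ f, G.Feasible f ∧ G.IsPNE θ f ∧ ∀ g, G.Feasible g → G.socialCost f ≤ G.socialCost g := by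
  obtain ⟨f, hf⟩ := hfeas
  obtain ⟨ω₀, hω₀, hmin⟩ := exists_isMinOn_mm1Potential hu hd
    (hf.exists_coords.imp fun _ h => h.1) 1
  have hratio : 1 + 1 * (∑ k, G.demand k) / (umin - ∑ k, G.demand k) ≤ θ := by
    have hud : 0 < umin - ∑ k, G.demand k := sub_pos.2 hd
    rw [one_sub_div humin.ne', mul_div_assoc', le_div_iff₀ humin] at hθ
    rw [one_mul, one_add_div hud.ne', sub_add_cancel, div_le_iff₀ hud]
    linarith
  refine ⟨pathFlowOf ω₀, G.feasible_pathFlowOf hω₀,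
    hω₀.isPNE_of_isMinOn_mm1Potential hu hd hlat zero_le_one hratio hmin, fun g hg => ?_⟩
  obtain ⟨ω, hω, rfl⟩ := hg.exists_coords
  exact hω₀.socialCost_le_of_isMinOn_mm1Potential_one hlat hmin hω

theorem exists_isPNE_socialCost_le (humin : 0 < umin) (hu : ∀ e, umin ≤ u e)
    (hd : ∑ k, G.demand k < umin)
    (hlat : ∀ e x, 0 ≤ x → x ≤ ∑ k, G.demand k → G.latency e x = 1 / (u e - x))
    (hfeas : ∃ f, G.Feasible f) (hθ₁ : 1 ≤ θ) (hθ : θ * (1 - (∑ k, G.demand k) / umin) < 1) :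
    ∃ f, G.Feasible f ∧ G.IsPNE θ f ∧ ∀ g, G.Feasible g → G.socialCost f ≤
      (1 / 2) * (1 + 1 / Real.sqrt (θ * (1 - (∑ k, G.demand k) / umin))) * G.socialCost g := by
  set d := ∑ k, G.demand k
  set ρ := d / umin
  have hρ1 : ρ < 1 := (div_lt_one humin).2 hd
  have hρ0 : 0 < ρ := by nlinarith
  have hθρ : 0 < θ * (1 - ρ) := by nlinarith
  set t := Real.sqrt (θ * (1 - ρ))
  have ht2 : t ^ 2 = θ * (1 - ρ) := Real.sq_sqrt hθρ.le
  have ht0 : 0 < t := Real.sqrt_pos.2 hθρ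
  have ht1 : t ≤ 1 := Real.sqrt_le_one.2 hθ.le
  have hρt : 1 - ρ ≤ t ^ 2 := by nlinarith
  have hS : d / (umin - d) = ρ / (1 - ρ) := by
    simp only [ρ]
    field_simp
  set σ := (t ^ 2 - (1 - ρ)) / ρ
  have hσ : 0 ≤ σ := div_nonneg (by linarith) hρ0.le
  have hratio : 1 + σ * d / (umin - d) ≤ θ := by
    have hσρ : σ * (ρ / (1 - ρ)) = θ - 1 := by
      have : 1 - ρ ≠ 0 := by linarith
      simp only [σ]
      field_simp
      rw [ht2]
      ring
    rw [mul_div_assoc, hS, hσρ]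
    linarith
  obtain ⟨f, hf⟩ := hfeas
  obtain ⟨ω₀, hω₀, hmin⟩ := exists_isMinOn_mm1Potential hu hd
    (hf.exists_coords.imp fun _ h => h.1) σ
  refine ⟨pathFlowOf ω₀, G.feasible_pathFlowOf hω₀,
    hω₀.isPNE_of_isMinOn_mm1Potential hu hd hlat hσ hratio hmin, fun g hg => ?_⟩
  obtain ⟨ω, hω, rfl⟩ := hg.exists_coords
  have hbound := hω₀.mul_socialCost_le_of_isMinOn_mm1Potential hu hd hlat hσ
    (div_le_one_of_le₀ (by linarith) (by linarith)) (hS ▸ smoothness_param hρ0 hρ1 ht0 ht1 hρt)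
    hmin hω
  have ha : 1 / 2 * (1 + 1 / t) = 1 / (2 * t / (1 + t)) := by
    field_simp
    ring
  rw [ha, one_div_mul_eq_div, le_div_iff₀ (by positivity), mul_comm]
  exact hbound

end Main

end RoutingInstance

open RoutingInstance in
theorem stmt_18_general {V E K : Type*} [Fintype E] [Fintype K] [DecidableEq E]
    (G : RoutingInstance V E K)
    (u : E → ℝ) (umin : ℝ) (humin : 0 < umin)
    (hu : ∀ e, umin ≤ u e)
    (hd : (∑ k, G.demand k) < umin)
    (hlat : ∀ e x, (0:ℝ) ≤ x → x ≤ ∑ k, G.demand k →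
      G.latency e x = 1 / (u e - x))
    (hfeas : ∃ f : K → (List E →₀ ℝ), G.Feasible f)
    (θ : ℝ) (hθ : 1 ≤ θ) :
    (∃ f : K → (List E →₀ ℝ), G.Feasible f ∧ G.IsPNE θ f ∧
      ∀ g : K → (List E →₀ ℝ), G.Feasible g →
        G.socialCost f ≤
          (1/2) * (1 + 1 / Real.sqrt
            (1 - max 0 (1 - θ * (1 - (∑ k, G.demand k) / umin)))) * G.socialCost g) ∧
    (1 / (1 - (∑ k, G.demand k) / umin) ≤ θ →
      ∃ f : K → (List E →₀ ℝ), G.Feasible f ∧ G.IsPNE θ f ∧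
        ∀ g : K → (List E →₀ ℝ), G.Feasible g → G.socialCost f ≤ G.socialCost g) := by
  rcases le_or_gt 1 (θ * (1 - (∑ k, G.demand k) / umin)) with h | h
  · obtain ⟨f, hf, hpne, hopt⟩ := exists_optimal_isPNE humin hu hd hlat hfeas h
    have hmax : max 0 (1 - θ * (1 - (∑ k, G.demand k) / umin)) = 0 := max_eq_left (by linarith)
    refine ⟨⟨f, hf, hpne, fun g hg => ?_⟩, fun _ => ⟨f, hf, hpne, hopt⟩⟩
    have hone : (1 / 2 : ℝ) * (1 + 1 / Real.sqrt (1 - 0)) = 1 := by norm_num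
    rw [hmax, hone, one_mul]
    exact hopt g hg
  · have hmax : 1 - max 0 (1 - θ * (1 - (∑ k, G.demand k) / umin)) =
        θ * (1 - (∑ k, G.demand k) / umin) := by
      rw [max_eq_right (by linarith)]
      ring
    have h1ρ : 0 < 1 - (∑ k, G.demand k) / umin := by
      rw [sub_pos, div_lt_one humin]
      exact hd
    refine ⟨?_, fun hθ' => absurd ((div_le_iff₀ h1ρ).1 hθ') (by linarith)⟩
    simpa only [hmax] using exists_isPNE_socialCost_le humin hu hd hlat hfeas hθ h

open RoutingInstance in
/-- For an instance with M/M/1 latencies ℓ_e(x) = 1/(u_e − x),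
u_e ≥ u_min > d (total demand d, ρ_max = d/u_min < 1) and any θ ≥ 1, with
ρ_max(θ) = max{0, 1 − θ(1 − ρ_max)}, there is a θ-PNE flow of social cost at most
(1/2)(1 + 1/√(1 − ρ_max(θ))) times the socially optimal cost; and if
θ ≥ 1/(1 − ρ_max) there is a θ-PNE flow of socially optimal cost. -/
theorem stmt_18 {V E K : Type*} [Fintype V] [Fintype E] [Fintype K] [DecidableEq E]
    (G : RoutingInstance V E K) (hG : G.Standard)
    (u : E → ℝ) (umin : ℝ) (humin : 0 < umin)
    (hu : ∀ e, umin ≤ u e)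
    (hd : (∑ k, G.demand k) < umin)
    (hlat : ∀ e x, (0:ℝ) ≤ x → x ≤ ∑ k, G.demand k →
      G.latency e x = 1 / (u e - x))
    (hfeas : ∃ f : K → (List E →₀ ℝ), G.Feasible f)
    (θ : ℝ) (hθ : 1 ≤ θ) :
    (∃ f : K → (List E →₀ ℝ), G.Feasible f ∧ G.IsPNE θ f ∧
      ∀ g : K → (List E →₀ ℝ), G.Feasible g →
        G.socialCost f ≤
          (1/2) * (1 + 1 / Real.sqrt
            (1 - max 0 (1 - θ * (1 - (∑ k, G.demand k) / umin)))) * G.socialCost g) ∧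
    (1 / (1 - (∑ k, G.demand k) / umin) ≤ θ →
      ∃ f : K → (List E →₀ ℝ), G.Feasible f ∧ G.IsPNE θ f ∧
        ∀ g : K → (List E →₀ ℝ), G.Feasible g → G.socialCost f ≤ G.socialCost g) :=
  stmt_18_general G u umin humin hu hd hlat hfeas θ hθ
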